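/- arXiv:1807.07610 — 5 statements merged into one kernel-verified Lean document; each statement's English description precedes it below -/
import Mathlib

section
/- Let n ≥ 1 and let X, Y be independent Gaussian random vectors in ℝⁿ with X ~ N(μ₁·𝟏, (1/2)·Iₙ) and Y ~ N(μ₂·𝟏, (1/2)·Iₙ). Independently of X and Y, each coordinate index i ∈ {1,…,n} of X and of Y is observed independently with probability p ∈ (0,1]; let Q ⊆ {1,…,n} be the (random) set of coordinates observed in both X and Y (so each i lies in Q independently with probability q = p²). Define the estimated squared distance d_p(X,Y)² = Σ_{i∈Q} (X_i − Y_i)². Set μ = μ₁ − μ₂. Then for every ε with 0 < ε < q(1+μ²) and every γ with 0 < γ < (q(1+μ²) − ε)/(1+μ²), one has Pr[d_p(X,Y)² < εn] ≤ exp(−2γ²n) + (exp(−((q−γ)(1+μ²) − ε)²/(4(q−γ)(1+2μ²))))ⁿ. -/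
/-!
Let `W i ∈ {0, 1}` record whether coordinate `i` is observed in both points and
`R i = (X i - Y i)²`, so that `d_p(X, Y)² = ∑ W i * R i`; the pairs `(R i, W i)` are independent,
`R i` is independent of `W i`, `E[W i] = q` and `X i - Y i ~ N(μ, 1)`.
If `d_p(X, Y)² < εn`, either the count `∑ W i` is at most `(q - γ)n`, which by Hoeffding's
inequality has probability at most `exp(-2γ²n)`, or `∑ W i ≥ (q - γ)n` and `∑ W i * R i ≤ εn`.
In the second case choose `L` with `e^L E[exp(-t R i)] = 1`, which the Gaussian integral gives as
`L = log √(1 + 2t) + tμ²/(1 + 2t)`. Then each `(L - t R i) W i` has exponential moment `1`, and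
Markov's inequality for `exp (∑ (L - t R i) W i)` bounds the probability by
`exp(tεn - (q - γ)nL)`. With `t = ((q - γ)(1 + μ²) - ε) / (2(q - γ)(1 + 2μ²))` and
`log(1 + x) ≥ x - x²/2` this is at most the second term.
-/

open MeasureTheory ProbabilityTheory Real Finset
open scoped NNReal

section

variable {Ω : Type*} {mΩ : MeasurableSpace Ω} {P : Measure Ω}

theorem ProbabilityTheory.iIndepFun.sigmaCurry {ι : Type*} {κ : ι → Type*}
    {𝓧 : (i : ι) → κ i → Type*} {m𝓧 : ∀ i j, MeasurableSpace (𝓧 i j)}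
    {X : (i : ι) → (j : κ i) → Ω → 𝓧 i j} (mX : ∀ i j, Measurable (X i j))
    (h : iIndepFun (fun p : (i : ι) × κ i => X p.1 p.2) P) :
    iIndepFun (fun i ω => (X i · ω)) P := by
  have := h.isProbabilityMeasure
  have : ∀ i j, IsProbabilityMeasure (P.map (X i j)) :=
    fun i j => Measure.isProbabilityMeasure_map (mX i j).aemeasurable
  rw [iIndepFun_iff_map_fun_eq_infinitePi_map (fun i => measurable_pi_lambda _ (mX i))]
  have hblock (i : ι) :
      P.map (fun ω j => X i j ω) = Measure.infinitePi (fun j => P.map (X i j)) :=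
    (h.precomp sigma_mk_injective).map_fun_eq_infinitePi_map (mX i)
  calc P.map (fun ω i j => X i j ω)
      = (P.map (fun ω (p : (i : ι) × κ i) => X p.1 p.2 ω)).map (MeasurableEquiv.piCurry 𝓧) := by
        rw [Measure.map_map (by fun_prop) (measurable_pi_lambda _ fun p => mX p.1 p.2)]; rfl
    _ = Measure.infinitePi fun i => Measure.infinitePi fun j => P.map (X i j) := by
        rw [h.map_fun_eq_infinitePi_map (fun p => mX p.1 p.2)]
        exact Measure.infinitePi_map_piCurry fun i j => P.map (X i j)
    _ = _ := by simp_rw [hblock]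

theorem ProbabilityTheory.iIndepFun.prodMk_of_sumElim {ι : Type*} {F₁ F₂ F₃ F₄ : ι → Ω → ℝ}
    (hF : ∀ k, Measurable (Sum.elim F₁ (Sum.elim F₂ (Sum.elim F₃ F₄)) k))
    (h : iIndepFun (Sum.elim F₁ (Sum.elim F₂ (Sum.elim F₃ F₄))) P) :
    iIndepFun (fun i ω => (F₁ i ω, F₂ i ω, F₃ i ω, F₄ i ω)) P := by
  let e : (_ : ι) × Fin 4 → ι ⊕ ι ⊕ ι ⊕ ι := fun p =>
    ![.inl p.1, .inr (.inl p.1), .inr (.inr (.inl p.1)), .inr (.inr (.inr p.1))] p.2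
  have he : e.Injective := by
    rintro ⟨i, j⟩ ⟨i', j'⟩ hij
    fin_cases j <;> fin_cases j' <;> simp_all [e]
  exact ((h.precomp he).sigmaCurry
    (X := fun i j => Sum.elim F₁ (Sum.elim F₂ (Sum.elim F₃ F₄)) (e ⟨i, j⟩)) (fun i j => hF _)).comp
    (fun _ v => (v 0, v 1, v 2, v 3)) (fun _ => by fun_prop)

theorem gaussianReal_sub_gaussianReal_of_indepFun {m₁ m₂ : ℝ} {v₁ v₂ : ℝ≥0} {X Y : Ω → ℝ}
    (hXY : IndepFun X Y P) (hX : P.map X = gaussianReal m₁ v₁)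
    (hY : P.map Y = gaussianReal m₂ v₂) :
    P.map (X - Y) = gaussianReal (m₁ - m₂) (v₁ + v₂) := by
  have hYm : AEMeasurable Y P :=
    AEMeasurable.of_map_ne_zero (by rw [hY]; exact IsProbabilityMeasure.ne_zero _)
  have hnegY : P.map (-Y) = gaussianReal (-m₂) v₂ := by
    rw [show -Y = (fun x => -x) ∘ Y from rfl,
      ← AEMeasurable.map_map_of_aemeasurable (by fun_prop) hYm, hY, gaussianReal_map_neg]
  rw [sub_eq_add_neg, sub_eq_add_neg]
  exact gaussianReal_add_gaussianReal_of_indepFun (hXY.comp measurable_id measurable_neg) hX hnegY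

theorem integral_exp_neg_mul_sq_gaussianReal (m : ℝ) (v : ℝ≥0) {t : ℝ} (hK : 0 < 1 + 2 * t * v) :
    ∫ x, exp (-t * x ^ 2) ∂gaussianReal m v =
      (√(1 + 2 * t * v))⁻¹ * exp (-t * m ^ 2 / (1 + 2 * t * v)) := by
  rcases eq_or_ne v 0 with rfl | hv
  · simp
  set K := 1 + 2 * t * v
  set v' : ℝ≥0 := v / K.toNNReal
  have hv' : (v' : ℝ) = v / K := by simp [v', hK.le]
  have hv'0 : v' ≠ 0 := by
    rw [← NNReal.coe_ne_zero, hv']; positivity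
  -- completing the square turns the Gaussian density times `exp (-t x²)` into a rescaled density
  have hpdf (x : ℝ) : gaussianPDFReal m v x * exp (-t * x ^ 2) =
      ((√K)⁻¹ * exp (-t * m ^ 2 / K)) * gaussianPDFReal (m / K) v' x := by
    have hsqrt : √(2 * π * v) = √K * √(2 * π * v') := by
      rw [← sqrt_mul hK.le, hv']; congr 1; field_simp
    have hexp : -(x - m) ^ 2 / (2 * v) + -t * x ^ 2 =
        -t * m ^ 2 / K + -(x - m / K) ^ 2 / (2 * v') := by
      rw [hv']; field_simp; ring
    simp only [gaussianPDFReal_def, hsqrt, mul_inv]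
    rw [mul_assoc, ← exp_add, hexp, exp_add]
    ring
  simp_rw [integral_gaussianReal_eq_integral_smul hv, smul_eq_mul, hpdf]
  rw [integral_const_mul, integral_gaussianPDFReal_eq_one _ hv'0, mul_one]

theorem integral_exp_neg_mul_sq_sub_of_indepFun {m₁ m₂ : ℝ} {v₁ v₂ : ℝ≥0} {X Y : Ω → ℝ}
    (hX : Measurable X) (hY : Measurable Y) (hXY : IndepFun X Y P)
    (hXlaw : P.map X = gaussianReal m₁ v₁) (hYlaw : P.map Y = gaussianReal m₂ v₂) {t : ℝ}
    (hK : 0 < 1 + 2 * t * (v₁ + v₂)) :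
    ∫ ω, exp (-t * (X ω - Y ω) ^ 2) ∂P =
      (√(1 + 2 * t * (v₁ + v₂)))⁻¹ * exp (-t * (m₁ - m₂) ^ 2 / (1 + 2 * t * (v₁ + v₂))) := by
  have hlaw := gaussianReal_sub_gaussianReal_of_indepFun hXY hXlaw hYlaw
  have h := integral_exp_neg_mul_sq_gaussianReal (m₁ - m₂) (v₁ + v₂) (by push_cast; exact hK)
  push_cast at h
  rw [← h, ← hlaw, integral_map (hX.sub hY).aemeasurable (by fun_prop)]
  rfl

theorem integral_exp_mul_of_indepFun_of_zero_or_one [IsProbabilityMeasure P] {V W : Ω → ℝ}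
    (hV : Measurable V) (hW : Measurable W) (hVW : IndepFun V W P)
    (hW01 : ∀ ω, W ω = 0 ∨ W ω = 1) (hexpV : Integrable (fun ω => exp (V ω)) P) :
    ∫ ω, exp (V ω * W ω) ∂P = 1 - P[W] + P[W] * ∫ ω, exp (V ω) ∂P := by
  have hsplit (ω : Ω) : exp (V ω * W ω) = 1 + (exp (V ω) - 1) * W ω := by
    rcases hW01 ω with h | h <;> simp [h]
  have hWint : Integrable W P :=
    (integrable_const (1 : ℝ)).mono' hW.aestronglyMeasurable
      (ae_of_all _ fun ω => by rcases hW01 ω with h | h <;> simp [h])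
  have hindep : IndepFun (fun ω => exp (V ω) - 1) W P :=
    hVW.comp (φ := fun x => exp x - 1) (ψ := id) (by fun_prop) measurable_id
  have hprod : ∫ ω, (exp (V ω) - 1) * W ω ∂P = (∫ ω, exp (V ω) ∂P - 1) * P[W] := by
    rw [hindep.integral_fun_mul_eq_mul_integral (by fun_prop) hW.aestronglyMeasurable,
      integral_sub hexpV (integrable_const 1)]
    simp
  simp_rw [hsplit]
  rw [integral_add (g := fun ω => (exp (V ω) - 1) * W ω) (integrable_const 1)
    (hindep.integrable_mul (hexpV.sub (integrable_const 1)) hWint), hprod]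
  simp
  ring

theorem integral_exp_mul_le_one_of_indepFun [IsProbabilityMeasure P] {V W : Ω → ℝ}
    (hV : Measurable V) (hW : Measurable W) (hVW : IndepFun V W P)
    (hW01 : ∀ ω, W ω = 0 ∨ W ω = 1) (hexpV : Integrable (fun ω => exp (V ω)) P)
    (hle : ∫ ω, exp (V ω) ∂P ≤ 1) :
    ∫ ω, exp (V ω * W ω) ∂P ≤ 1 := by
  have hWmean : 0 ≤ P[W] := integral_nonneg fun ω => by rcases hW01 ω with h | h <;> simp [h]
  rw [integral_exp_mul_of_indepFun_of_zero_or_one hV hW hVW hW01 hexpV]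
  nlinarith

theorem measureReal_sum_le_sum_integral_sub_le {ι : Type*} {W : ι → Ω → ℝ}
    (hindep : iIndepFun W P) (hW : ∀ i, Measurable (W i)) (hWIcc : ∀ i ω, W i ω ∈ Set.Icc 0 1)
    (s : Finset ι) {γ : ℝ} (hγ : 0 ≤ γ) :
    P.real {ω | ∑ i ∈ s, W i ω ≤ ∑ i ∈ s, P[W i] - γ * #s} ≤ exp (-2 * γ ^ 2 * #s) := by
  have := hindep.isProbabilityMeasure
  have hsubG (i : ι) : HasSubgaussianMGF (fun ω => P[W i] - W i ω) (1 / 4) P := by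
    have h := (hasSubgaussianMGF_of_mem_Icc (μ := P) (hW i).aemeasurable
      (ae_of_all _ (hWIcc i))).neg
    convert h using 1
    · ext ω; simp
    · simp; norm_num
  have hcentred : iIndepFun (fun i ω => (P[W i] - W i ω)) P :=
    hindep.comp (fun i x => (∫ ω, W i ω ∂P) - x) (fun i => by fun_prop)
  have hHoeffding := HasSubgaussianMGF.measure_sum_ge_le_of_iIndepFun hcentred
    (fun i _ => hsubG i) (s := s) (mul_nonneg hγ (Nat.cast_nonneg #s))
  calc P.real {ω | ∑ i ∈ s, W i ω ≤ ∑ i ∈ s, P[W i] - γ * #s}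
      = P.real {ω | γ * #s ≤ ∑ i ∈ s, (P[W i] - W i ω)} := by
        congr 1; ext ω
        simp only [Set.mem_ofPred_eq, sum_sub_distrib]
        constructor <;> intro h <;> linarith
    _ ≤ exp (-(γ * #s) ^ 2 / (2 * ((∑ i ∈ s, 1 / 4 : ℝ≥0) : ℝ))) := hHoeffding
    _ = exp (-2 * γ ^ 2 * #s) := by
        rcases eq_or_ne #s 0 with hs | hs
        · simp [hs]
        · congr 1; push_cast; rw [sum_const, nsmul_eq_mul]; field_simp; ring

theorem measureReal_le_sum_and_sum_mul_le {ι : Type*} {R W : ι → Ω → ℝ}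
    (hindep : iIndepFun (fun i ω => (R i ω, W i ω)) P) (hR : ∀ i, Measurable (R i))
    (hW : ∀ i, Measurable (W i)) (hRW : ∀ i, IndepFun (R i) (W i) P)
    (hR0 : ∀ i ω, 0 ≤ R i ω) (hW01 : ∀ i ω, W i ω = 0 ∨ W i ω = 1)
    {t L : ℝ} (ht : 0 ≤ t) (hL : 0 ≤ L) (hLR : ∀ i, exp L * ∫ ω, exp (-t * R i ω) ∂P ≤ 1)
    (s : Finset ι) (c e : ℝ) :
    P.real {ω | c ≤ ∑ i ∈ s, W i ω ∧ ∑ i ∈ s, W i ω * R i ω ≤ e} ≤ exp (t * e - c * L) := by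
  have := hindep.isProbabilityMeasure
  set U : ι → Ω → ℝ := fun i ω => (L - t * R i ω) * W i ω
  have hUm (i : ι) : Measurable (U i) := by fun_prop
  have hUindep : iIndepFun U P :=
    hindep.comp (fun _ x => (L - t * x.1) * x.2) (fun _ => by fun_prop)
  have hUL (i : ι) (ω : Ω) : U i ω ≤ L := by
    rcases hW01 i ω with h | h <;> simp [U, h, hL, mul_nonneg ht (hR0 i ω)]
  have hexpU (i : ι) : Integrable (fun ω => exp (1 * U i ω)) P :=
    (integrable_const (exp L)).mono' (by fun_prop) (ae_of_all _ fun ω => by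
      simpa [abs_of_pos (exp_pos _)] using hUL i ω)
  have hexpR (i : ι) : Integrable (fun ω => exp (-t * R i ω)) P :=
    (integrable_const (1 : ℝ)).mono' (by fun_prop) (ae_of_all _ fun ω => by
      simpa [abs_of_pos (exp_pos _)] using mul_nonneg ht (hR0 i ω))
  have hmgfU (i : ι) : mgf (U i) P 1 ≤ 1 := by
    simp only [mgf, one_mul, U]
    exact integral_exp_mul_le_one_of_indepFun (V := fun ω => L - t * R i ω) (by fun_prop) (hW i)
      ((hRW i).comp (φ := fun x => L - t * x) (ψ := id) (by fun_prop) measurable_id) (hW01 i)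
      (by simpa [sub_eq_add_neg, exp_add] using (hexpR i).const_mul (exp L))
      (by simpa [sub_eq_add_neg, exp_add, integral_const_mul] using hLR i)
  have hmgf : mgf (∑ i ∈ s, U i) P 1 ≤ 1 := by
    rw [hUindep.mgf_sum hUm]
    exact Finset.prod_le_one (fun i _ => mgf_nonneg) (fun i _ => hmgfU i)
  have hevent : {ω | c ≤ ∑ i ∈ s, W i ω ∧ ∑ i ∈ s, W i ω * R i ω ≤ e} ⊆
      {ω | c * L - t * e ≤ (∑ i ∈ s, U i) ω} := by
    rintro ω ⟨hc, he⟩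
    have hsum : (∑ i ∈ s, U i) ω = L * ∑ i ∈ s, W i ω - t * ∑ i ∈ s, W i ω * R i ω := by
      simp only [Finset.sum_apply, U, mul_sum, ← sum_sub_distrib]
      exact sum_congr rfl fun i _ => by ring
    simp only [Set.mem_ofPred_eq, hsum]
    nlinarith [mul_le_mul_of_nonneg_left hc hL, mul_le_mul_of_nonneg_left he ht]
  calc P.real {ω | c ≤ ∑ i ∈ s, W i ω ∧ ∑ i ∈ s, W i ω * R i ω ≤ e}
      ≤ P.real {ω | c * L - t * e ≤ (∑ i ∈ s, U i) ω} := measureReal_mono hevent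
    _ ≤ exp (-1 * (c * L - t * e)) * mgf (∑ i ∈ s, U i) P 1 :=
        measure_ge_le_exp_mul_mgf _ zero_le_one (hUindep.integrable_exp_mul_sum hUm
          (fun i _ => hexpU i))
    _ ≤ exp (t * e - c * L) := by
        rw [show -1 * (c * L - t * e) = t * e - c * L by ring]
        exact mul_le_of_le_one_right (exp_pos _).le hmgf

theorem measureReal_sum_mul_lt_le {ι : Type*} [Fintype ι] {R W : ι → Ω → ℝ}
    (hindep : iIndepFun (fun i ω => (R i ω, W i ω)) P) (hR : ∀ i, Measurable (R i))
    (hW : ∀ i, Measurable (W i)) (hRW : ∀ i, IndepFun (R i) (W i) P)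
    (hR0 : ∀ i ω, 0 ≤ R i ω) (hW01 : ∀ i ω, W i ω = 0 ∨ W i ω = 1) {q : ℝ}
    (hEW : ∀ i, P[W i] = q) {γ t L : ℝ} (hγ : 0 ≤ γ) (ht : 0 ≤ t) (hL : 0 ≤ L)
    (hLR : ∀ i, exp L * ∫ ω, exp (-t * R i ω) ∂P ≤ 1) (e : ℝ) :
    P.real {ω | ∑ i, W i ω * R i ω < e} ≤
      exp (-2 * γ ^ 2 * Fintype.card ι) + exp (t * e - (q - γ) * Fintype.card ι * L) := by
  have := hindep.isProbabilityMeasure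
  have hcount := measureReal_sum_le_sum_integral_sub_le
    (hindep.comp (fun _ => Prod.snd) (fun _ => measurable_snd)) hW
    (fun i ω => by rcases hW01 i ω with h | h <;> simp [h]) univ hγ
  have hsum := measureReal_le_sum_and_sum_mul_le hindep hR hW hRW hR0 hW01 ht hL hLR univ
    ((q - γ) * Fintype.card ι) e
  simp only [Function.comp_apply, hEW, sum_const, card_univ, nsmul_eq_mul] at hcount
  refine (measureReal_mono fun ω hω => ?_).trans
    ((measureReal_union_le _ _).trans (add_le_add hcount hsum))
  by_cases hc : ∑ i, W i ω ≤ Fintype.card ι * q - γ * Fintype.card ι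
  · exact Or.inl hc
  · exact Or.inr ⟨by linarith, le_of_lt hω⟩

theorem le_log_sqrt_one_add_two_mul_add (μ t : ℝ) (ht : 0 ≤ t) :
    t * (1 + μ ^ 2) - t ^ 2 * (1 + 2 * μ ^ 2) ≤ log √(1 + 2 * t) + t * μ ^ 2 / (1 + 2 * t) := by
  have hlog : t - t ^ 2 ≤ log √(1 + 2 * t) := by
    rw [log_sqrt (by positivity)]
    have h := le_log_one_add_of_nonneg (by positivity : 0 ≤ 2 * t)
    have h' : t - t ^ 2 ≤ 2 * (2 * t) / (2 * t + 2) / 2 := by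
      rw [div_div, le_div_iff₀ (by positivity)]
      nlinarith [pow_nonneg ht 3]
    linarith
  have hfrac : t * μ ^ 2 - 2 * t ^ 2 * μ ^ 2 ≤ t * μ ^ 2 / (1 + 2 * t) := by
    rw [le_div_iff₀ (by positivity)]
    nlinarith [mul_nonneg (pow_nonneg ht 3) (sq_nonneg μ)]
  nlinarith

theorem chernoff_exponent_le {μ s ε t L : ℝ} (hs : 0 < s)
    (ht : t = (s * (1 + μ ^ 2) - ε) / (2 * s * (1 + 2 * μ ^ 2)))
    (hL : t * (1 + μ ^ 2) - t ^ 2 * (1 + 2 * μ ^ 2) ≤ L) :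
    t * ε - s * L ≤ -(s * (1 + μ ^ 2) - ε) ^ 2 / (4 * s * (1 + 2 * μ ^ 2)) := by
  have hquad : t * ε - s * (t * (1 + μ ^ 2) - t ^ 2 * (1 + 2 * μ ^ 2)) =
      -(s * (1 + μ ^ 2) - ε) ^ 2 / (4 * s * (1 + 2 * μ ^ 2)) := by
    subst ht; field_simp; ring
  nlinarith [mul_le_mul_of_nonneg_left hL hs.le]

section MissingCoordinates

variable {ι : Type*} {X Y A B : Ω → ι → ℝ}

noncomputable def bothObserved (A B : Ω → ι → ℝ) (i : ι) (ω : Ω) : ℝ :=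
  if A ω i = 1 ∧ B ω i = 1 then 1 else 0

theorem bothObserved_eq_zero_or_one (i : ι) (ω : Ω) :
    bothObserved A B i ω = 0 ∨ bothObserved A B i ω = 1 := by
  unfold bothObserved; split_ifs <;> simp

open scoped Classical in
theorem sum_filter_eq_sum_bothObserved_mul [Fintype ι] (f : ι → ℝ) (ω : Ω) :
    ∑ i ∈ univ.filter (fun i => A ω i = 1 ∧ B ω i = 1), f i = ∑ i, bothObserved A B i ω * f i := by
  rw [sum_filter]
  exact sum_congr rfl fun i _ => by simp only [bothObserved]; split_ifs <;> simp

variable (hX : ∀ i, Measurable fun ω => X ω i) (hY : ∀ i, Measurable fun ω => Y ω i)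
  (hA : ∀ i, Measurable fun ω => A ω i) (hB : ∀ i, Measurable fun ω => B ω i)
  (hindep : iIndepFun (Sum.elim (fun (i : ι) ω => X ω i)
    (Sum.elim (fun (i : ι) ω => Y ω i)
      (Sum.elim (fun (i : ι) ω => A ω i) (fun (i : ι) ω => B ω i)))) P)

include hA hB in
theorem measurable_bothObserved (i : ι) : Measurable (bothObserved A B i) :=
  Measurable.ite ((hA i (measurableSet_singleton 1)).inter (hB i (measurableSet_singleton 1)))
    measurable_const measurable_const

include hX hY hA hB in
theorem measurable_sumElim_coords :
    ∀ k, Measurable (Sum.elim (fun (i : ι) ω => X ω i) (Sum.elim (fun (i : ι) ω => Y ω i)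
      (Sum.elim (fun (i : ι) ω => A ω i) (fun (i : ι) ω => B ω i))) k) := by
  rintro (i | i | i | i) <;> simp [*]

include hX hY hA hB hindep in
theorem iIndepFun_sq_sub_bothObserved :
    iIndepFun (fun i ω => ((X ω i - Y ω i) ^ 2, bothObserved A B i ω)) P :=
  (hindep.prodMk_of_sumElim (measurable_sumElim_coords hX hY hA hB)).comp
    (fun _ x => ((x.1 - x.2.1) ^ 2, if x.2.2.1 = 1 ∧ x.2.2.2 = 1 then 1 else 0))
    (fun _ => (by fun_prop : Measurable fun x : ℝ × ℝ × ℝ × ℝ => (x.1 - x.2.1) ^ 2).prodMk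
      (Measurable.ite (by measurability) measurable_const measurable_const))

include hX hY hA hB hindep in
theorem indepFun_sq_sub_bothObserved (i : ι) :
    IndepFun (fun ω => (X ω i - Y ω i) ^ 2) (bothObserved A B i) P :=
  (hindep.indepFun_prodMk_prodMk (measurable_sumElim_coords hX hY hA hB) (.inl i) (.inr (.inl i))
    (.inr (.inr (.inl i))) (.inr (.inr (.inr i))) (by simp) (by simp) (by simp) (by simp)).comp
    (φ := fun x : ℝ × ℝ => (x.1 - x.2) ^ 2)
    (ψ := fun x : ℝ × ℝ => if x.1 = 1 ∧ x.2 = 1 then 1 else 0)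
    (by fun_prop) (Measurable.ite (by measurability) measurable_const measurable_const)

include hA hB hindep in
theorem integral_bothObserved {p : ℝ} (hp : 0 ≤ p)
    (hA1 : ∀ i, P {ω | A ω i = 1} = ENNReal.ofReal p)
    (hB1 : ∀ i, P {ω | B ω i = 1} = ENNReal.ofReal p) (i : ι) :
    P[bothObserved A B i] = p ^ 2 := by
  have hAB : IndepFun (fun ω => A ω i) (fun ω => B ω i) P :=
    hindep.indepFun (i := .inr (.inr (.inl i))) (j := .inr (.inr (.inr i))) (by simp)
  have hind : bothObserved A B i =
      ((fun ω => A ω i) ⁻¹' {1} ∩ (fun ω => B ω i) ⁻¹' {1}).indicator 1 := by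
    ext ω; simp [bothObserved, Set.indicator]
  rw [hind, integral_indicator_one ((hA i (measurableSet_singleton 1)).inter
    (hB i (measurableSet_singleton 1))), measureReal_def,
    hAB.measure_inter_preimage_eq_mul _ _ (measurableSet_singleton 1) (measurableSet_singleton 1)]
  simp only [Set.preimage, Set.mem_singleton_iff, hA1, hB1]
  rw [ENNReal.toReal_mul, ENNReal.toReal_ofReal hp, sq]

include hX hY hindep in
theorem exp_mul_integral_exp_neg_mul_sq_sub_eq_one {μ₁ μ₂ : ℝ}
    (hXlaw : ∀ i, P.map (fun ω => X ω i) = gaussianReal μ₁ (1 / 2 : ℝ≥0))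
    (hYlaw : ∀ i, P.map (fun ω => Y ω i) = gaussianReal μ₂ (1 / 2 : ℝ≥0)) {t : ℝ} (ht : 0 ≤ t)
    (i : ι) :
    exp (log √(1 + 2 * t) + t * (μ₁ - μ₂) ^ 2 / (1 + 2 * t)) *
      ∫ ω, exp (-t * (X ω i - Y ω i) ^ 2) ∂P = 1 := by
  rw [integral_exp_neg_mul_sq_sub_of_indepFun (hX i) (hY i)
    (hindep.indepFun (i := .inl i) (j := .inr (.inl i)) (by simp)) (hXlaw i) (hYlaw i)
    (by norm_num; positivity)]
  norm_num
  rw [exp_add, exp_log (sqrt_pos.2 (by positivity)), neg_div, exp_neg]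
  field_simp

end MissingCoordinates

end

open scoped Classical in
theorem stmt_0_general {Ω : Type*} [MeasurableSpace Ω] (P : Measure Ω) [IsProbabilityMeasure P]
    (n : ℕ) (μ₁ μ₂ : ℝ) (p : ℝ) (hp0 : 0 < p)
    (X Y : Ω → Fin n → ℝ) (A B : Ω → Fin n → ℝ)
    (hXmeas : ∀ i, Measurable fun ω => X ω i)
    (hYmeas : ∀ i, Measurable fun ω => Y ω i)
    (hAmeas : ∀ i, Measurable fun ω => A ω i)
    (hBmeas : ∀ i, Measurable fun ω => B ω i)
    -- all the coordinates of `X`, `Y` and of the masks `A`, `B` are mutually independent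
    (hindep : iIndepFun
      (Sum.elim (fun (i : Fin n) ω => X ω i)
        (Sum.elim (fun (i : Fin n) ω => Y ω i)
          (Sum.elim (fun (i : Fin n) ω => A ω i) (fun (i : Fin n) ω => B ω i)))) P)
    -- each coordinate of `X` is `N(μ₁, 1/2)` and each coordinate of `Y` is `N(μ₂, 1/2)`
    (hXlaw : ∀ i, Measure.map (fun ω => X ω i) P = gaussianReal μ₁ (1 / 2 : NNReal))
    (hYlaw : ∀ i, Measure.map (fun ω => Y ω i) P = gaussianReal μ₂ (1 / 2 : NNReal))
    -- each coordinate is observed (mask value `1`) with probability `p`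
    (hA1 : ∀ i, P {ω | A ω i = 1} = ENNReal.ofReal p)
    (hB1 : ∀ i, P {ω | B ω i = 1} = ENNReal.ofReal p)
    (μ q : ℝ) (hμ : μ = μ₁ - μ₂) (hq : q = p ^ 2)
    (ε : ℝ) (hε0 : 0 < ε)
    (γ : ℝ) (hγ0 : 0 < γ) (hγ : γ < (q * (1 + μ ^ 2) - ε) / (1 + μ ^ 2)) :
    P {ω | ∑ i ∈ Finset.univ.filter (fun i => A ω i = 1 ∧ B ω i = 1),
          (X ω i - Y ω i) ^ 2 < ε * n} ≤
      ENNReal.ofReal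
        (Real.exp (-2 * γ ^ 2 * n) +
          Real.exp (-((q - γ) * (1 + μ ^ 2) - ε) ^ 2 /
            (4 * (q - γ) * (1 + 2 * μ ^ 2))) ^ n) := by
  have hδ : 0 < (q - γ) * (1 + μ ^ 2) - ε := by
    rw [lt_div_iff₀ (by positivity)] at hγ; linarith
  have hs : 0 < q - γ := by nlinarith
  set t := ((q - γ) * (1 + μ ^ 2) - ε) / (2 * (q - γ) * (1 + 2 * μ ^ 2)) with ht
  have ht0 : 0 ≤ t := by positivity
  set L := log √(1 + 2 * t) + t * μ ^ 2 / (1 + 2 * t)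
  have hL : 0 ≤ L := add_nonneg (log_nonneg (one_le_sqrt.2 (by linarith))) (by positivity)
  have hbound := measureReal_sum_mul_lt_le
    (iIndepFun_sq_sub_bothObserved hXmeas hYmeas hAmeas hBmeas hindep) (fun i => by fun_prop)
    (measurable_bothObserved hAmeas hBmeas)
    (indepFun_sq_sub_bothObserved hXmeas hYmeas hAmeas hBmeas hindep) (fun _ _ => sq_nonneg _)
    bothObserved_eq_zero_or_one
    (hq ▸ integral_bothObserved hAmeas hBmeas hindep hp0.le hA1 hB1) hγ0.le ht0 hL
    (fun i => (hμ ▸ exp_mul_integral_exp_neg_mul_sq_sub_eq_one hXmeas hYmeas hindep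
      hXlaw hYlaw ht0 i).le) (ε * n)
  have hexp : exp (t * (ε * n) - (q - γ) * n * L) ≤
      exp (-((q - γ) * (1 + μ ^ 2) - ε) ^ 2 / (4 * (q - γ) * (1 + 2 * μ ^ 2))) ^ n := by
    rw [← exp_nat_mul, exp_le_exp]
    have := chernoff_exponent_le hs ht (le_log_sqrt_one_add_two_mul_add μ t ht0)
    nlinarith [mul_le_mul_of_nonneg_left this (Nat.cast_nonneg n : (0 : ℝ) ≤ n)]
  simp only [Fintype.card_fin] at hbound
  simp_rw [sum_filter_eq_sum_bothObserved_mul]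
  rw [← ofReal_measureReal]
  exact ENNReal.ofReal_le_ofReal (hbound.trans (add_le_add le_rfl hexp))

open scoped Classical in
/-- Tail bound for the distance estimated by the MR-Missing algorithm between two
Gaussian points with independently observed coordinates. `X ~ N(μ₁·𝟏, ½I)`,
`Y ~ N(μ₂·𝟏, ½I)` in `ℝⁿ` with all coordinates independent; the `{0,1}`-valued masks
`A`, `B` record which coordinates of `X` (resp. `Y`) are observed, each coordinate
independently with probability `p`, independently of everything else. `Q(ω)` is the set
of coordinates observed in both points, and the estimated squared distance is
`d_p(X,Y)² = ∑_{i ∈ Q} (X_i − Y_i)²`. Then with `μ = μ₁ − μ₂`, `q = p²`, for all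
`0 < ε < q(1+μ²)` and `0 < γ < (q(1+μ²) − ε)/(1+μ²)`,
`Pr[d_p(X,Y)² < εn] ≤ exp(−2γ²n) + exp(−((q−γ)(1+μ²) − ε)²/(4(q−γ)(1+2μ²)))ⁿ`. -/
theorem stmt_0 {Ω : Type*} [MeasurableSpace Ω] (P : Measure Ω) [IsProbabilityMeasure P]
    (n : ℕ) (hn : 1 ≤ n) (μ₁ μ₂ : ℝ) (p : ℝ) (hp0 : 0 < p) (hp1 : p ≤ 1)
    (X Y : Ω → Fin n → ℝ) (A B : Ω → Fin n → ℝ)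
    (hXmeas : ∀ i, Measurable fun ω => X ω i)
    (hYmeas : ∀ i, Measurable fun ω => Y ω i)
    (hAmeas : ∀ i, Measurable fun ω => A ω i)
    (hBmeas : ∀ i, Measurable fun ω => B ω i)
    -- all the coordinates of `X`, `Y` and of the masks `A`, `B` are mutually independent
    (hindep : iIndepFun
      (Sum.elim (fun (i : Fin n) ω => X ω i)
        (Sum.elim (fun (i : Fin n) ω => Y ω i)
          (Sum.elim (fun (i : Fin n) ω => A ω i) (fun (i : Fin n) ω => B ω i)))) P)
    -- each coordinate of `X` is `N(μ₁, 1/2)` and each coordinate of `Y` is `N(μ₂, 1/2)`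
    (hXlaw : ∀ i, Measure.map (fun ω => X ω i) P = gaussianReal μ₁ (1 / 2 : NNReal))
    (hYlaw : ∀ i, Measure.map (fun ω => Y ω i) P = gaussianReal μ₂ (1 / 2 : NNReal))
    -- each coordinate is observed (mask value `1`) with probability `p`
    (hA1 : ∀ i, P {ω | A ω i = 1} = ENNReal.ofReal p)
    (hA0 : ∀ i, P {ω | A ω i = 0} = ENNReal.ofReal (1 - p))
    (hB1 : ∀ i, P {ω | B ω i = 1} = ENNReal.ofReal p)
    (hB0 : ∀ i, P {ω | B ω i = 0} = ENNReal.ofReal (1 - p))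
    (μ q : ℝ) (hμ : μ = μ₁ - μ₂) (hq : q = p ^ 2)
    (ε : ℝ) (hε0 : 0 < ε) (hε : ε < q * (1 + μ ^ 2))
    (γ : ℝ) (hγ0 : 0 < γ) (hγ : γ < (q * (1 + μ ^ 2) - ε) / (1 + μ ^ 2)) :
    P {ω | ∑ i ∈ Finset.univ.filter (fun i => A ω i = 1 ∧ B ω i = 1),
          (X ω i - Y ω i) ^ 2 < ε * n} ≤
      ENNReal.ofReal
        (Real.exp (-2 * γ ^ 2 * n) +
          Real.exp (-((q - γ) * (1 + μ ^ 2) - ε) ^ 2 /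
            (4 * (q - γ) * (1 + 2 * μ ^ 2))) ^ n) :=
  stmt_0_general P n μ₁ μ₂ p hp0 X Y A B hXmeas hYmeas hAmeas hBmeas hindep hXlaw hYlaw hA1 hB1 μ q
    hμ hq ε hε0 γ hγ0 hγ
end

section
/- (Birgé's lower tail bound for the noncentral chi-square distribution.) Let D ≥ 1 be an integer and let Z₁,…,Z_D be independent real Gaussian random variables with Z_i ~ N(μ_i, 1). Set X = Z₁² + ⋯ + Z_D² and λ = Σ_{i=1}^D μ_i². Then for all c with 0 < c < D + λ, Pr[X ≤ c] ≤ exp(−(D + λ − c)²/(4(D + 2λ))). -/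
/-!
For `s ≥ 0` the Laplace transform of `X = ∑ Zᵢ²` at `-s` is computed exactly by completing the
square, `E e^{-s Zᵢ²} = (1 + 2s)^{-1/2} e^{-s μᵢ² / (1 + 2s)}`, and bounded using
`log (1 + u) ≥ u - u²/2` and `1/(1 + 2s) ≥ 1 - 2s`: it is at most
`exp (-s (D + λ) + s² (D + 2λ))`, i.e. the lower tail of `X` is sub-Gaussian around its mean
`D + λ` with variance proxy `2 (D + 2λ)`. Chernoff's bound at `s = (D + λ - c) / (2 (D + 2λ))`
gives the claim.
-/

open MeasureTheory ProbabilityTheory Real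
open scoped NNReal

lemma sub_sq_div_two_le_log_one_add {u : ℝ} (hu : 0 ≤ u) : u - u ^ 2 / 2 ≤ log (1 + u) := by
  refine le_trans ?_ (le_log_one_add_of_nonneg hu)
  rw [le_div_iff₀ (by linarith)]
  nlinarith [pow_nonneg hu 3]

lemma inv_sqrt_one_add_two_mul_le_exp {s : ℝ} (hs : 0 ≤ s) :
    (√(1 + 2 * s))⁻¹ ≤ exp (s ^ 2 - s) := by
  have h : exp (s - s ^ 2) ≤ √(1 + 2 * s) := by
    rw [Real.le_sqrt (exp_nonneg _) (by linarith), ← exp_nat_mul]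
    calc exp ((2 : ℕ) * (s - s ^ 2)) ≤ exp (log (1 + 2 * s)) := by
          have := sub_sq_div_two_le_log_one_add (by linarith : 0 ≤ 2 * s)
          gcongr
          push_cast
          linarith
      _ = 1 + 2 * s := exp_log (by linarith)
  calc (√(1 + 2 * s))⁻¹ ≤ (exp (s - s ^ 2))⁻¹ := inv_anti₀ (exp_pos _) h
    _ = exp (s ^ 2 - s) := by rw [← exp_neg, neg_sub]

lemma mgf_sq_gaussianReal (m : ℝ) (v : ℝ≥0) {t : ℝ} (ht : 2 * t * v < 1) :
    mgf (fun x ↦ x ^ 2) (gaussianReal m v) t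
      = (√(1 - 2 * t * v))⁻¹ * exp (t * m ^ 2 / (1 - 2 * t * v)) := by
  rcases eq_or_ne v 0 with rfl | hv
  · simp [mgf]
  have hv0 : (0 : ℝ) < v := by positivity
  set a := 1 - 2 * t * v
  have ha0 : 0 < a := by linarith
  have hsq : ∀ x : ℝ, gaussianPDFReal m v x • exp (t * x ^ 2)
      = ((√(2 * π * v))⁻¹ * exp (t * m ^ 2 / a)) * exp (-(a / (2 * v)) * (x - m / a) ^ 2) := by
    intro x
    rw [gaussianPDFReal, smul_eq_mul, mul_assoc ((√(2 * π * v))⁻¹), ← exp_add,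
      mul_assoc _ (exp _), ← exp_add]
    congr 2
    field_simp
    ring
  rw [mgf, integral_gaussianReal_eq_integral_smul hv]
  simp_rw [hsq]
  rw [integral_const_mul, integral_sub_right_eq_self (fun x ↦ exp (-(a / (2 * v)) * x ^ 2)),
    integral_gaussian, show π / (a / (2 * v)) = 2 * π * v / a by field_simp, sqrt_div' _ ha0.le]
  have : √(2 * π * v) ≠ 0 := by positivity
  field_simp

lemma mgf_sq_gaussianReal_neg_le (m : ℝ) {s : ℝ} (hs : 0 ≤ s) :
    mgf (fun x ↦ x ^ 2) (gaussianReal m 1) (-s)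
      ≤ exp (-s * (1 + m ^ 2) + s ^ 2 * (1 + 2 * m ^ 2)) := by
  rw [mgf_sq_gaussianReal m 1 (by simp; linarith)]
  simp only [NNReal.coe_one, mul_one, mul_neg, sub_neg_eq_add]
  have hdiv : -s * m ^ 2 / (1 + 2 * s) ≤ -s * m ^ 2 + 2 * s ^ 2 * m ^ 2 := by
    rw [div_le_iff₀ (by linarith)]
    nlinarith [mul_nonneg (mul_nonneg hs (sq_nonneg m)) (sq_nonneg s)]
  calc (√(1 + 2 * s))⁻¹ * exp (-s * m ^ 2 / (1 + 2 * s))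
      ≤ exp (s ^ 2 - s) * exp (-s * m ^ 2 + 2 * s ^ 2 * m ^ 2) := by
        gcongr
        exact inv_sqrt_one_add_two_mul_le_exp hs
    _ = exp (-s * (1 + m ^ 2) + s ^ 2 * (1 + 2 * m ^ 2)) := by rw [← exp_add]; ring_nf

lemma mgf_sum_sq_neg_le {Ω ι : Type*} [MeasurableSpace Ω] [Fintype ι] {P : Measure Ω}
    {Z : ι → Ω → ℝ} {μ : ι → ℝ} (hmeas : ∀ i, Measurable (Z i)) (hindep : iIndepFun Z P)
    (hlaw : ∀ i, P.map (Z i) = gaussianReal (μ i) 1) {s : ℝ} (hs : 0 ≤ s) :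
    mgf (fun ω ↦ ∑ i, Z i ω ^ 2) P (-s)
      ≤ exp (-s * (Fintype.card ι + ∑ i, μ i ^ 2)
          + s ^ 2 * (Fintype.card ι + 2 * ∑ i, μ i ^ 2)) := by
  have hsq : iIndepFun (fun i ω ↦ Z i ω ^ 2) P :=
    hindep.comp (fun _ x ↦ x ^ 2) fun _ ↦ measurable_id.pow_const 2
  have hfun : (fun ω ↦ ∑ i, Z i ω ^ 2) = ∑ i, fun ω ↦ Z i ω ^ 2 := by ext; simp
  rw [hfun, hsq.mgf_sum (fun i ↦ (hmeas i).pow_const 2)]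
  calc ∏ i, mgf (fun ω ↦ Z i ω ^ 2) P (-s)
      = ∏ i, mgf (fun x ↦ x ^ 2) (gaussianReal (μ i) 1) (-s) := by
        refine Finset.prod_congr rfl fun i _ ↦ ?_
        rw [← hlaw i, mgf_map (hmeas i).aemeasurable (by fun_prop)]
        rfl
    _ ≤ ∏ i, exp (-s * (1 + μ i ^ 2) + s ^ 2 * (1 + 2 * μ i ^ 2)) :=
        Finset.prod_le_prod (fun _ _ ↦ mgf_nonneg) fun i _ ↦ mgf_sq_gaussianReal_neg_le (μ i) hs
    _ = _ := by
        rw [← exp_sum]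
        simp [Finset.sum_add_distrib, ← Finset.mul_sum]

lemma measureReal_le_le_exp_of_mgf_neg_le {Ω : Type*} [MeasurableSpace Ω] {P : Measure Ω}
    [IsFiniteMeasure P] {X : Ω → ℝ} {m b c : ℝ} (hX : AEMeasurable X P) (hX0 : 0 ≤ᵐ[P] X)
    (hb : 0 < b) (hc : c ≤ m) (hmgf : ∀ s, 0 ≤ s → mgf X P (-s) ≤ exp (-s * m + s ^ 2 * b)) :
    P.real {ω | X ω ≤ c} ≤ exp (-(m - c) ^ 2 / (4 * b)) := by
  set s := (m - c) / (2 * b)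
  have hs : 0 ≤ s := div_nonneg (by linarith) (by linarith)
  have hint : Integrable (fun ω ↦ exp (-s * X ω)) P := by
    refine .of_mem_Icc 0 1 (by fun_prop) ?_
    filter_upwards [hX0] with ω hω
    exact ⟨(exp_pos _).le, exp_le_one_iff.2 (by simpa using mul_nonneg hs hω)⟩
  calc P.real {ω | X ω ≤ c} ≤ exp (-(-s) * c) * mgf X P (-s) :=
        measure_le_le_exp_mul_mgf c (by linarith) hint
    _ ≤ exp (-(-s) * c) * exp (-s * m + s ^ 2 * b) := by gcongr; exact hmgf s hs
    _ = exp (-(m - c) ^ 2 / (4 * b)) := by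
        rw [← exp_add]
        congr 1
        simp only [s]
        field_simp
        ring

theorem stmt_1_general {Ω : Type*} [MeasurableSpace Ω] (P : Measure Ω) [IsProbabilityMeasure P]
    (D : ℕ) (μ : Fin D → ℝ) (Z : Fin D → Ω → ℝ)
    (hmeas : ∀ i, Measurable (Z i))
    (hindep : iIndepFun Z P)
    (hlaw : ∀ i, Measure.map (Z i) P = gaussianReal (μ i) 1)
    (lam : ℝ) (hlam : lam = ∑ i, μ i ^ 2)
    (c : ℝ) (hc0 : 0 < c) (hc : c < D + lam) :
    P {ω | ∑ i, Z i ω ^ 2 ≤ c} ≤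
      ENNReal.ofReal (Real.exp (-(D + lam - c) ^ 2 / (4 * (D + 2 * lam)))) := by
  have hlam0 : 0 ≤ lam := hlam ▸ Finset.sum_nonneg fun i _ ↦ sq_nonneg (μ i)
  have hbound := measureReal_le_le_exp_of_mgf_neg_le (P := P) (X := fun ω ↦ ∑ i, Z i ω ^ 2)
    (m := D + lam) (b := D + 2 * lam) (by fun_prop) (ae_of_all _ fun ω ↦ by positivity)
    (by linarith) hc.le fun s hs ↦ by
      rw [hlam]
      simpa only [Fintype.card_fin] using mgf_sum_sq_neg_le hmeas hindep hlaw hs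
  rw [← ofReal_measureReal]
  exact ENNReal.ofReal_le_ofReal hbound

/-- (Birgé) Lower tail bound for the noncentral chi-square distribution: if
`Z₁, …, Z_D` are independent Gaussians with `Z i ~ N(μ i, 1)`, `X = ∑ (Z i)²` and
`λ = ∑ (μ i)²`, then for `0 < c < D + λ`,
`Pr[X ≤ c] ≤ exp(−(D + λ − c)² / (4(D + 2λ)))`. -/
theorem stmt_1 {Ω : Type*} [MeasurableSpace Ω] (P : Measure Ω) [IsProbabilityMeasure P]
    (D : ℕ) (hD : 1 ≤ D) (μ : Fin D → ℝ) (Z : Fin D → Ω → ℝ)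
    (hmeas : ∀ i, Measurable (Z i))
    (hindep : iIndepFun Z P)
    (hlaw : ∀ i, Measure.map (Z i) P = gaussianReal (μ i) 1)
    (lam : ℝ) (hlam : lam = ∑ i, μ i ^ 2)
    (c : ℝ) (hc0 : 0 < c) (hc : c < D + lam) :
    P {ω | ∑ i, Z i ω ^ 2 ≤ c} ≤
      ENNReal.ofReal (Real.exp (-(D + lam - c) ^ 2 / (4 * (D + 2 * lam)))) :=
  stmt_1_general P D μ Z hmeas hindep hlaw lam hlam c hc0 hc
end

section
/- Let μ ∈ ℝ, let k ≥ 1 be an integer, and let Z₁,…,Z_k be i.i.d. real Gaussian random variables with Z_i ~ N(μ, 1). Then for all c with 0 < c < k(1 + μ²), Pr[Σ_{j=1}^k Z_j² ≤ c] ≤ exp(−(k(1 + μ²) − c)²/(4k(1 + 2μ²))). -/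
/-!
Chernoff's method. For `Z ~ N(μ, v)` and `t ≥ 0`, completing the square gives
`E exp(-t Z²) = exp(-t μ² / (1 + 2tv)) / √(1 + 2tv)`, and `log (1 + u) ≥ u - u² / 2` bounds this
by `exp(-t (μ² + v) + t² v (v + 2μ²))`. For a sum of `k` independent variables with
`E exp(-t X) ≤ exp(-t m + t² w)`, Markov's inequality gives `P(∑ X ≤ k m - a) ≤ exp(-t a + k w t²)`,
which is smallest at `t = a / (2 k w)`.
-/

open MeasureTheory ProbabilityTheory Real NNReal

theorem integral_rexp_quadratic {b : ℝ} (hb : b < 0) (c d : ℝ) :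
    ∫ x : ℝ, rexp (b * x ^ 2 + c * x + d) = √(π / -b) * rexp (d - c ^ 2 / (4 * b)) := by
  have h_complete_sq (x : ℝ) : rexp (b * x ^ 2 + c * x + d)
      = rexp (-(-b) * (x + c / (2 * b)) ^ 2) * rexp (d - c ^ 2 / (4 * b)) := by
    rw [← exp_add]
    congr 1
    field_simp [hb.ne]
    ring
  simp_rw [h_complete_sq]
  rw [integral_mul_const, integral_add_right_eq_self (fun y ↦ rexp (-(-b) * y ^ 2)),
    integral_gaussian]

theorem integral_exp_mul_sq_gaussianReal (μ : ℝ) (v : ℝ≥0) {s : ℝ} (hs : 2 * s * v < 1) :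
    ∫ x, rexp (s * x ^ 2) ∂gaussianReal μ v
      = rexp (s * μ ^ 2 / (1 - 2 * s * v)) / √(1 - 2 * s * v) := by
  rcases eq_or_ne v 0 with rfl | hv
  · simp [gaussianReal_zero_var]
  have h_pdf (x : ℝ) : gaussianPDFReal μ v x • rexp (s * x ^ 2)
      = (√(2 * π * v))⁻¹ * rexp (-((1 - 2 * s * v) / (2 * v)) * x ^ 2 + μ / v * x
          + -μ ^ 2 / (2 * v)) := by
    rw [gaussianPDFReal, smul_eq_mul, mul_assoc, ← exp_add]
    congr 2
    field_simp
    ring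
  have h1 : 0 < 1 - 2 * s * v := by linarith
  rw [integral_gaussianReal_eq_integral_smul hv, integral_congr_ae (.of_forall h_pdf),
    integral_const_mul, integral_rexp_quadratic (by field_simp; linarith)]
  have h_sqrt : √(π / -(-((1 - 2 * s * v) / (2 * v)))) = √(2 * π * v) / √(1 - 2 * s * v) := by
    rw [← sqrt_div' _ h1.le]
    congr 1
    field_simp
  rw [h_sqrt]
  have h_exp : -μ ^ 2 / (2 * v) - (μ / v) ^ 2 / (4 * -((1 - 2 * s * v) / (2 * v)))
      = s * μ ^ 2 / (1 - 2 * s * v) := by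
    generalize hw : 1 - 2 * s * (v : ℝ) = w at h1 ⊢
    field_simp
    rw [← hw]
    ring
  rw [h_exp]
  field_simp

section

variable {Ω : Type*} {mΩ : MeasurableSpace Ω} {P : Measure Ω}

theorem mgf_sq_gaussianReal_s5 {X : Ω → ℝ} {μ : ℝ} {v : ℝ≥0} (hX : P.map X = gaussianReal μ v)
    {s : ℝ} (hs : 2 * s * v < 1) :
    mgf (fun ω ↦ X ω ^ 2) P s = rexp (s * μ ^ 2 / (1 - 2 * s * v)) / √(1 - 2 * s * v) := by
  have hX_meas : AEMeasurable X P := aemeasurable_of_map_neZero (by rw [hX]; infer_instance)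
  rw [← integral_exp_mul_sq_gaussianReal μ v hs, ← hX, integral_map hX_meas (by fun_prop), mgf]

theorem mgf_sq_gaussianReal_neg_le_s5 {X : Ω → ℝ} {μ : ℝ} {v : ℝ≥0}
    (hX : P.map X = gaussianReal μ v) {t : ℝ} (ht : 0 ≤ t) :
    mgf (fun ω ↦ X ω ^ 2) P (-t) ≤ rexp (-t * (μ ^ 2 + v) + t ^ 2 * (v * (v + 2 * μ ^ 2))) := by
  have hu : 0 ≤ 2 * t * v := by positivity
  rw [mgf_sq_gaussianReal_s5 hX (by linarith), show 1 - 2 * -t * v = 1 + 2 * t * v by ring,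
    ← exp_log (sqrt_pos.2 (by linarith : 0 < 1 + 2 * t * v)), ← exp_sub, exp_le_exp,
    log_sqrt (by linarith)]
  have h_log : 2 * t * v - (2 * t * v) ^ 2 / 2 ≤ log (1 + 2 * t * v) := by
    refine le_trans ?_ (le_log_one_add_of_nonneg hu)
    rw [le_div_iff₀ (by linarith)]
    nlinarith [pow_nonneg hu 3]
  have h_frac : -t * μ ^ 2 / (1 + 2 * t * v) ≤ -t * μ ^ 2 + 2 * t ^ 2 * v * μ ^ 2 := by
    rw [div_le_iff₀ (by linarith)]
    nlinarith [mul_nonneg (mul_nonneg hu hu) (mul_nonneg ht (sq_nonneg μ))]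
  linarith

theorem measure_sum_le_le_exp_of_mgf_neg_le {ι : Type*} [Fintype ι] {X : ι → Ω → ℝ}
    (h_indep : iIndepFun X P) (h_meas : ∀ i, AEMeasurable (X i) P) {m v : ℝ} (hv : 0 ≤ v)
    (h_int : ∀ i t, 0 ≤ t → Integrable (fun ω ↦ rexp (-t * X i ω)) P)
    (h_mgf : ∀ i t, 0 ≤ t → mgf (X i) P (-t) ≤ rexp (-t * m + t ^ 2 * v))
    {a : ℝ} (ha : 0 ≤ a) :
    P.real {ω | ∑ i, X i ω ≤ Fintype.card ι * m - a}
      ≤ rexp (-a ^ 2 / (4 * Fintype.card ι * v)) := by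
  have := h_indep.isProbabilityMeasure
  set n : ℝ := (Fintype.card ι : ℝ)
  set t := a / (2 * (n * v))
  have ht : 0 ≤ t := by positivity
  have h_mgf_sum : mgf (∑ i, X i) P (-t) = ∏ i, mgf (X i) P (-t) := h_indep.mgf_sum₀ h_meas _
  have h_int_sum : Integrable (fun ω ↦ rexp (-t * (∑ i, X i) ω)) P := by
    rw [← mgf_pos_iff, h_mgf_sum]
    exact Finset.prod_pos fun i _ ↦ mgf_pos (h_int i t ht)
  have h_exponent : t * (n * m - a) + n * (-t * m + t ^ 2 * v) = -a ^ 2 / (4 * n * v) := by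
    rcases eq_or_ne (n * v) 0 with h | h
    · -- then `t = 0` and `-a² / 0 = 0`
      simp [t, h, mul_assoc]
    · simp only [t]
      field_simp
      ring
  calc P.real {ω | ∑ i, X i ω ≤ n * m - a}
      ≤ rexp (-(-t) * (n * m - a)) * mgf (∑ i, X i) P (-t) := by
        simpa only [Finset.sum_apply] using
          measure_le_le_exp_mul_mgf (n * m - a) (neg_nonpos.2 ht) h_int_sum
    _ ≤ rexp (t * (n * m - a)) * ∏ _i : ι, rexp (-t * m + t ^ 2 * v) := by
        rw [neg_neg, h_mgf_sum]
        gcongr with i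
        exacts [fun i _ ↦ mgf_nonneg, h_mgf i t ht]
    _ = rexp (-a ^ 2 / (4 * n * v)) := by
        rw [Finset.prod_const, ← exp_nat_mul, ← exp_add, Finset.card_univ, h_exponent]

end

theorem stmt_5_general {Ω : Type*} [MeasurableSpace Ω] (P : Measure Ω) [IsProbabilityMeasure P]
    (k : ℕ) (μ : ℝ) (Z : Fin k → Ω → ℝ)
    (hindep : iIndepFun Z P)
    (hlaw : ∀ j, Measure.map (Z j) P = gaussianReal μ 1)
    (c : ℝ) (hc : c < k * (1 + μ ^ 2)) :
    P {ω | ∑ j, Z j ω ^ 2 ≤ c} ≤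
      ENNReal.ofReal
        (Real.exp (-(k * (1 + μ ^ 2) - c) ^ 2 / (4 * k * (1 + 2 * μ ^ 2)))) := by
  have h_indep : iIndepFun (fun j ω ↦ Z j ω ^ 2) P :=
    hindep.comp (fun _ x ↦ x ^ 2) fun _ ↦ measurable_id.pow_const 2
  have h_meas j : AEMeasurable (fun ω ↦ Z j ω ^ 2) P :=
    (aemeasurable_of_map_neZero (by rw [hlaw j]; infer_instance)).pow_const 2
  have h_int j t (ht : 0 ≤ t) : Integrable (fun ω ↦ rexp (-t * Z j ω ^ 2)) P := by
    have hs : 2 * -t * ((1 : ℝ≥0) : ℝ) < 1 := by push_cast; linarith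
    rw [← mgf_pos_iff, mgf_sq_gaussianReal_s5 (hlaw j) hs]
    exact div_pos (exp_pos _) (sqrt_pos.2 (by linarith))
  have h_mgf j t (ht : 0 ≤ t) :
      mgf (fun ω ↦ Z j ω ^ 2) P (-t) ≤ rexp (-t * (1 + μ ^ 2) + t ^ 2 * (1 + 2 * μ ^ 2)) := by
    simpa [add_comm] using mgf_sq_gaussianReal_neg_le_s5 (hlaw j) ht
  have h_tail := measure_sum_le_le_exp_of_mgf_neg_le h_indep h_meas (by positivity) h_int h_mgf
    (a := k * (1 + μ ^ 2) - c) (by linarith)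
  rw [Fintype.card_fin, sub_sub_cancel] at h_tail
  rw [← ofReal_measureReal]
  exact ENNReal.ofReal_le_ofReal h_tail

/-- Specialization of Birgé's noncentral chi-square lower tail bound to equal means:
if `Z₁, …, Z_k` are i.i.d. Gaussians `N(μ, 1)`, then for `0 < c < k(1 + μ²)`,
`Pr[∑ Z_j² ≤ c] ≤ exp(−(k(1 + μ²) − c)² / (4k(1 + 2μ²)))`. -/
theorem stmt_5 {Ω : Type*} [MeasurableSpace Ω] (P : Measure Ω) [IsProbabilityMeasure P]
    (k : ℕ) (hk : 1 ≤ k) (μ : ℝ) (Z : Fin k → Ω → ℝ)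
    (hmeas : ∀ j, Measurable (Z j))
    (hindep : iIndepFun Z P)
    (hlaw : ∀ j, Measure.map (Z j) P = gaussianReal μ 1)
    (c : ℝ) (hc0 : 0 < c) (hc : c < k * (1 + μ ^ 2)) :
    P {ω | ∑ j, Z j ω ^ 2 ≤ c} ≤
      ENNReal.ofReal
        (Real.exp (-(k * (1 + μ ^ 2) - c) ^ 2 / (4 * k * (1 + 2 * μ ^ 2)))) :=
  stmt_5_general P k μ Z hindep hlaw c hc
end

section
/- Let x₁,…,xₙ be arbitrary points in ℝ^d, let D be the n×n matrix with D_ij = ‖x_i − x_j‖ (Euclidean distance), let J = Iₙ − (1/n)·𝟏ₙ𝟏ₙᵀ, and let S = −(1/2)·J (D ∘ D) J, where D ∘ D is the entrywise square of D. Then S is a symmetric positive semidefinite matrix. -/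
/-! Expanding `‖xᵢ - xⱼ‖² = ‖xᵢ‖² + ‖xⱼ‖² - 2⟪xᵢ, xⱼ⟫` writes the squared distance matrix as two
rank-one matrices, constant along rows resp. columns, minus twice the Gram matrix. The centering
matrix `J` is symmetric and kills constant vectors, so it annihilates both rank-one terms from
either side, leaving `S = Jᵀ G J` with `G` the Gram matrix, which is positive semidefinite. -/

open Matrix

namespace Matrix

section Centering

variable (ι K : Type*) [Fintype ι] [DecidableEq ι] [Field K]

def centeringMatrix : Matrix ι ι K := 1 - (Fintype.card ι : K)⁻¹ • of fun _ _ => 1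

variable {ι K}

lemma centeringMatrix_transpose : (centeringMatrix ι K)ᵀ = centeringMatrix ι K := by
  ext i j
  simp [centeringMatrix, one_apply, eq_comm]

lemma centeringMatrix_mulVec_one [CharZero K] [Nonempty ι] : centeringMatrix ι K *ᵥ 1 = 0 := by
  ext i
  simp [centeringMatrix, mulVec, dotProduct, one_apply]

end Centering

variable {ι E : Type*} [Fintype ι] [NormedAddCommGroup E] [InnerProductSpace ℝ E]

omit [Fintype ι] in
lemma of_dist_sq_eq_norm_sq_sub_gram (x : ι → E) :
    of (fun i j => dist (x i) (x j) ^ 2) =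
      vecMulVec (fun i => ‖x i‖ ^ 2) 1 + vecMulVec 1 (fun i => ‖x i‖ ^ 2) - (2 : ℝ) • gram ℝ x := by
  ext i j
  simp [dist_eq_norm, norm_sub_sq_real]
  ring

lemma neg_half_smul_mul_dist_sq_mul_eq {J : Matrix ι ι ℝ} (hJ : Jᵀ = J) (hJ1 : J *ᵥ 1 = 0)
    (x : ι → E) :
    (-(1 / 2 : ℝ)) • (J * of (fun i j => dist (x i) (x j) ^ 2) * J) = Jᵀ * gram ℝ x * J := by
  have h1J : 1 ᵥ* J = 0 := by rw [← mulVec_transpose, hJ, hJ1]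
  simp only [of_dist_sq_eq_norm_sq_sub_gram, mul_sub, mul_add, sub_mul, add_mul, mul_vecMulVec,
    vecMulVec_mul, hJ1, h1J]
  simp [hJ, smul_smul]

lemma posSemidef_neg_half_smul_mul_dist_sq_mul {J : Matrix ι ι ℝ} (hJ : Jᵀ = J)
    (hJ1 : J *ᵥ 1 = 0) (x : ι → E) :
    ((-(1 / 2 : ℝ)) • (J * of (fun i j => dist (x i) (x j) ^ 2) * J)).PosSemidef := by
  rw [neg_half_smul_mul_dist_sq_mul_eq hJ hJ1, ← conjTranspose_eq_transpose_of_trivial]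
  exact (posSemidef_gram ℝ x).conjTranspose_mul_mul_same J

end Matrix

/-- The doubly centered matrix of (negative half) squared Euclidean distances of any
finite point configuration is symmetric positive semidefinite. -/
theorem stmt_8 (n d : ℕ) (hn : 0 < n) (x : Fin n → EuclideanSpace ℝ (Fin d))
    (D : Matrix (Fin n) (Fin n) ℝ) (hD : ∀ i j, D i j = dist (x i) (x j))
    (J S : Matrix (Fin n) (Fin n) ℝ)
    (hJ : J = (1 : Matrix (Fin n) (Fin n) ℝ) - (n : ℝ)⁻¹ • Matrix.of (fun _ _ => (1 : ℝ)))
    (hS : S = (-(1 / 2 : ℝ)) • (J * Matrix.of (fun i j => D i j ^ 2) * J)) :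
    S.IsSymm ∧ S.PosSemidef := by
  have : NeZero n := ⟨hn.ne'⟩
  have hJc : J = centeringMatrix (Fin n) ℝ := by
    rw [hJ, centeringMatrix, Fintype.card_fin]
  have hPSD : S.PosSemidef := by
    simp only [hS, hD, hJc]
    exact posSemidef_neg_half_smul_mul_dist_sq_mul centeringMatrix_transpose
      centeringMatrix_mulVec_one x
  exact ⟨isHermitian_iff_isSymm.mp hPSD.isHermitian, hPSD⟩
end

section
/- (Gilbert–Sonthalia.) Let G be a finite weighted graph with positive edge weights w that is chordal, meaning every cycle in G of length at least four has a chord (an edge of G joining two nonconsecutive vertices of the cycle). Assume no 3-cycle of G is broken, i.e., for every triangle {u, v, z} in G each edge weight is at most the sum of the other two: w(u,v) ≤ w(u,z) + w(z,v), and similarly for the other two edges. Then for every edge {u, v} of G, the shortest weighted path in G between u and v is the edge {u, v} itself; that is, the shortest-path distance d_G(u,v) equals w(u,v). -/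
open SimpleGraph

/-- The weight of a walk: the sum of the weights of its edges. -/
def walkWeight {V : Type*} {G : SimpleGraph V} (w : Sym2 V → ℝ) {u v : V}
    (p : G.Walk u v) : ℝ :=
  (p.edges.map w).sum

/-- The shortest-path distance between `u` and `v` in the weighted graph `(G, w)`:
the infimum over all paths from `u` to `v` of the sum of the weights of their edges. -/
noncomputable def spDist {V : Type*} (G : SimpleGraph V) (w : Sym2 V → ℝ) (u v : V) : ℝ :=
  sInf {x : ℝ | ∃ p : G.Walk u v, p.IsPath ∧ walkWeight w p = x}

/-- A chord of a cycle `p` in `G`: an edge of `G` joining two vertices of the cycle that are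
not consecutive on the cycle (equivalently, an edge of `G` between vertices of the cycle
that is not an edge of the cycle). -/
def HasChord {V : Type*} (G : SimpleGraph V) {v : V} (p : G.Walk v v) : Prop :=
  ∃ e ∈ G.edgeSet, e ∉ p.edges ∧ ∀ x ∈ e, x ∈ p.support

/-- A graph is chordal if every cycle of length at least four has a chord. -/
def IsChordalGraph {V : Type*} (G : SimpleGraph V) : Prop :=
  ∀ (v : V) (p : G.Walk v v), p.IsCycle → 4 ≤ p.length → HasChord G p

namespace GSAux

variable {V : Type*} {G : SimpleGraph V}

lemma walkWeight_append (w : Sym2 V → ℝ) {u v x : V} (p : G.Walk u v) (q : G.Walk v x) :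
    walkWeight w (p.append q) = walkWeight w p + walkWeight w q := by
  simp [walkWeight, Walk.edges_append]

lemma walkWeight_cons (w : Sym2 V → ℝ) {u v x : V} (h : G.Adj u v) (p : G.Walk v x) :
    walkWeight w (Walk.cons h p) = w s(u, v) + walkWeight w p := by
  simp [walkWeight]

lemma support_concat : ∀ {a b : V} (r : G.Walk a b), ∃ l, r.support = l ++ [b]
  | _, _, Walk.nil => ⟨[], rfl⟩
  | a, b, Walk.cons _ r => by
      obtain ⟨l, hl⟩ := support_concat r
      exact ⟨a :: l, by rw [Walk.support_cons, hl, List.cons_append]⟩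

lemma edges_of_length_one {a b : V} (r : G.Walk a b) (h : r.length = 1) :
    r.edges = [s(a, b)] := by
  cases r with
  | nil => simp at h
  | cons had r' =>
    cases r' with
    | nil => simp
    | cons _ _ => simp [Walk.length_cons] at h

lemma split [DecidableEq V] : ∀ {u v : V} (p : G.Walk u v) {x y : V},
    x ∈ p.support → y ∈ p.support → x ≠ y →
    (∃ (q : G.Walk u x) (r : G.Walk x y) (s : G.Walk y v), p = q.append (r.append s)) ∨
    (∃ (q : G.Walk u y) (r : G.Walk y x) (s : G.Walk x v), p = q.append (r.append s)) := by
  intro u v p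
  induction p with
  | nil =>
      intro x y hx hy hxy
      simp only [Walk.support_nil, List.mem_singleton] at hx hy
      exact absurd (hx.trans hy.symm) hxy
  | cons h q ih =>
      intro x y hx hy hxy
      rw [Walk.support_cons, List.mem_cons] at hx hy
      rcases hx with rfl | hx
      · rcases hy with rfl | hy
        · exact absurd rfl hxy
        · have hyP : y ∈ (Walk.cons h q).support := by
            rw [Walk.support_cons]; exact List.mem_cons_of_mem _ hy
          exact Or.inl ⟨Walk.nil, (Walk.cons h q).takeUntil y hyP,
            (Walk.cons h q).dropUntil y hyP, by rw [Walk.nil_append, Walk.take_spec]⟩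
      · rcases hy with rfl | hy
        · have hxP : x ∈ (Walk.cons h q).support := by
            rw [Walk.support_cons]; exact List.mem_cons_of_mem _ hx
          exact Or.inr ⟨Walk.nil, (Walk.cons h q).takeUntil x hxP,
            (Walk.cons h q).dropUntil x hxP, by rw [Walk.nil_append, Walk.take_spec]⟩
        · rcases ih hx hy hxy with ⟨qq, r, s, hq⟩ | ⟨qq, r, s, hq⟩
          · exact Or.inl ⟨Walk.cons h qq, r, s, by rw [Walk.cons_append, ← hq]⟩
          · exact Or.inr ⟨Walk.cons h qq, r, s, by rw [Walk.cons_append, ← hq]⟩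

lemma not_mem_edges {u v : V} (p : G.Walk u v) (hpath : p.IsPath) (h2 : 2 ≤ p.length) :
    s(u, v) ∉ p.edges := by
  cases p with
  | nil => simp at h2
  | cons h q =>
    rw [Walk.cons_isPath_iff] at hpath
    intro hmem
    rw [Walk.edges_cons, List.mem_cons] at hmem
    rcases hmem with heq | hmem
    · rw [Sym2.eq_iff] at heq
      rcases heq with ⟨-, rfl⟩ | ⟨rfl, -⟩
      · have hq := hpath.1
        rw [Walk.isPath_iff_eq_nil] at hq
        subst hq
        simp at h2
      · exact h.ne rfl
    · exact hpath.2 (Walk.fst_mem_support_of_mem_edges q hmem)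

lemma key (w : Sym2 V → ℝ) (hchordal : IsChordalGraph G)
    (htri : ∀ u v z : V, G.Adj u v → G.Adj v z → G.Adj u z →
      w s(u, v) ≤ w s(u, z) + w s(z, v)) :
    ∀ n : ℕ, ∀ {u v : V} (p : G.Walk u v), p.IsPath → G.Adj u v → p.length ≤ n →
      w s(u, v) ≤ walkWeight w p := by
  classical
  intro n
  induction n using Nat.strong_induction_on with
  | _ n IH =>
  intro u v p hpath huv hn
  by_cases h3 : p.length ≤ 2
  · cases p with
    | nil => exact absurd rfl huv.ne
    | cons h q =>
      cases q with
      | nil => simp [walkWeight]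
      | cons h' q' =>
        cases q' with
        | nil =>
            have ht := htri u v _ huv h'.symm h
            simp only [walkWeight, Walk.edges_cons, Walk.edges_nil, List.map_cons,
              List.map_nil, List.sum_cons, List.sum_nil, add_zero]
            linarith
        | cons _ _ => simp [Walk.length_cons] at h3
  · push_neg at h3
    have h2 : 2 ≤ p.length := by omega
    have hne := not_mem_edges p hpath h2
    have hCcyc : (Walk.cons huv.symm p).IsCycle := by
      rw [Walk.cons_isCycle_iff]
      exact ⟨hpath, by rw [Sym2.eq_swap]; exact hne⟩
    obtain ⟨e, heE, heC, hesupp⟩ := hchordal v _ hCcyc (by simp [Walk.length_cons]; omega)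
    revert heE heC hesupp
    induction e using Sym2.ind with
    | _ x y =>
    intro heE heC hesupp
    have hadj : G.Adj x y := G.mem_edgeSet.mp heE
    have hx : x ∈ p.support := by
      have := hesupp x (by simp)
      rw [Walk.support_cons, List.mem_cons] at this
      rcases this with rfl | hx
      · exact Walk.end_mem_support p
      · exact hx
    have hy : y ∈ p.support := by
      have := hesupp y (by simp)
      rw [Walk.support_cons, List.mem_cons] at this
      rcases this with rfl | hy
      · exact Walk.end_mem_support p
      · exact hy
    rw [Walk.edges_cons, List.mem_cons] at heC
    push_neg at heC
    obtain ⟨hne1, hnep⟩ := heC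
    have main : ∀ (a b : V), G.Adj a b → s(a, b) = s(x, y) →
        ∀ (q : G.Walk u a) (r : G.Walk a b) (s : G.Walk b v),
        p = q.append (r.append s) → w s(u, v) ≤ walkWeight w p := by
      intro a b hab habe q r s hp
      have hpath' := hpath
      rw [hp] at hpath'
      have hqp : q.IsPath := hpath'.of_append_left
      have hrsp := hpath'.of_append_right
      have hsp : s.IsPath := hrsp.of_append_right
      have hrp : r.IsPath := hrsp.of_append_left
      have hlen : p.length = q.length + (r.length + s.length) := by
        rw [hp, Walk.length_append, Walk.length_append]
      have hr0 : r.length ≠ 0 := fun h0 => hab.ne (Walk.eq_of_length_eq_zero h0)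
      have hr1 : r.length ≠ 1 := by
        intro h1
        apply hnep
        rw [← habe, hp, Walk.edges_append, Walk.edges_append, edges_of_length_one r h1]
        simp
      have hqs : ¬(q.length = 0 ∧ s.length = 0) := by
        rintro ⟨hq0, hs0⟩
        have h1 : u = a := Walk.eq_of_length_eq_zero hq0
        have h2' : b = v := Walk.eq_of_length_eq_zero hs0
        subst h1; subst h2'
        exact hne1 (habe.symm.trans Sym2.eq_swap)
      have hwr : w s(a, b) ≤ walkWeight w r :=
        IH (n - 1) (by omega) r hrp hab (by omega)
      cases r with
      | nil => exact absurd rfl hab.ne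
      | cons hac r₂ =>
        simp only [Walk.length_cons] at hlen hr0 hr1
        obtain ⟨l, hl⟩ := support_concat r₂
        have hps : p.support = q.support ++ ((l ++ [b]) ++ s.support.tail) := by
          rw [hp, Walk.support_append, Walk.support_append, Walk.support_cons,
            List.cons_append, List.tail_cons, hl]
        have hps' : (q.append (Walk.cons hab s)).support
            = q.support ++ (b :: s.support.tail) := by
          rw [Walk.support_append, Walk.support_cons, List.tail_cons,
            Walk.support_eq_cons s]
          rfl
        have hsub : (q.append (Walk.cons hab s)).support.Sublist p.support := by
          rw [hps, hps', List.append_assoc]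
          exact List.Sublist.append_left (List.sublist_append_right l _) _
        have hp'path : (q.append (Walk.cons hab s)).IsPath := by
          rw [Walk.isPath_def]
          exact hsub.nodup ((Walk.isPath_def p).mp hpath)
        have hp'len : (q.append (Walk.cons hab s)).length = q.length + (s.length + 1) := by
          rw [Walk.length_append, Walk.length_cons]
        have h1 : w s(u, v) ≤ walkWeight w (q.append (Walk.cons hab s)) :=
          IH (n - 1) (by omega) _ hp'path huv (by omega)
        have e1 : walkWeight w p
            = walkWeight w q + (walkWeight w (Walk.cons hac r₂) + walkWeight w s) := by
          rw [hp, walkWeight_append, walkWeight_append]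
        have e2 : walkWeight w (q.append (Walk.cons hab s))
            = walkWeight w q + (w s(a, b) + walkWeight w s) := by
          rw [walkWeight_append, walkWeight_cons]
        linarith
    obtain hsplit | hsplit := split p hx hy hadj.ne
    · obtain ⟨q, r, s, hp⟩ := hsplit
      exact main x y hadj rfl q r s hp
    · obtain ⟨q, r, s, hp⟩ := hsplit
      exact main y x hadj.symm Sym2.eq_swap q r s hp

end GSAux

/-- (Gilbert–Sonthalia) In a finite chordal graph with positive edge weights in which no
3-cycle is broken, the shortest weighted path between the endpoints of any edge is the edge
itself: the shortest-path distance equals the edge weight. -/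
theorem stmt_10 {V : Type*} [Fintype V] (G : SimpleGraph V) (w : Sym2 V → ℝ)
    (hpos : ∀ e ∈ G.edgeSet, 0 < w e)
    (hchordal : IsChordalGraph G)
    (htri : ∀ u v z : V, G.Adj u v → G.Adj v z → G.Adj u z →
      w s(u, v) ≤ w s(u, z) + w s(z, v))
    (u v : V) (huv : G.Adj u v) :
    spDist G w u v = w s(u, v) := by
  have hlb : ∀ x ∈ {x : ℝ | ∃ p : G.Walk u v, p.IsPath ∧ walkWeight w p = x},
      w s(u, v) ≤ x := by
    rintro x ⟨p, hp, rfl⟩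
    exact GSAux.key w hchordal htri p.length p hp huv le_rfl
  have hmem : w s(u, v) ∈ {x : ℝ | ∃ p : G.Walk u v, p.IsPath ∧ walkWeight w p = x} := by
    refine ⟨Walk.cons huv Walk.nil, ?_, ?_⟩
    · rw [Walk.cons_isPath_iff]
      exact ⟨Walk.IsPath.nil, by simp [huv.ne]⟩
    · simp [walkWeight]
  exact le_antisymm (csInf_le ⟨_, hlb⟩ hmem) (le_csInf ⟨_, hmem⟩ hlb)
end
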